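/- Let α₁, α₂, α₃ be noncollinear complex numbers and m₁, m₂, m₃ positive reals. Then both zeros of F(z) = m₁/(z − α₁) + m₂/(z − α₂) + m₃/(z − α₃) lie strictly inside the triangle with vertices α₁, α₂, α₃ (i.e., in its open convex hull). -/

import Mathlib

noncomputable section

lemma conj_div_aux (m : ℝ) (w : ℂ) (hw : w ≠ 0) :
    (m : ℂ) / (starRingEnd ℂ w) = ((m / Complex.normSq w : ℝ) : ℂ) * w := by
  have hns : (Complex.normSq w : ℂ) ≠ 0 := by
    simpa [Complex.normSq_eq_zero] using hw
  have hcw : starRingEnd ℂ w ≠ 0 := by simpa using hw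
  rw [Complex.ofReal_div, div_mul_eq_mul_div, eq_div_iff hns, div_mul_eq_mul_div,
    div_eq_iff hcw]
  rw [← Complex.mul_conj w]
  ring

/-- Gauss–Lucas-type statement: for noncollinear `α₁, α₂, α₃ ∈ ℂ` and positive weights,
every zero of `F(z) = m₁/(z−α₁) + m₂/(z−α₂) + m₃/(z−α₃)` lies strictly inside the
triangle with vertices `α₁, α₂, α₃`. -/
theorem log_derivative_zeros_in_open_triangle
    (α₁ α₂ α₃ : ℂ)
    (hnc : ¬ Collinear ℝ ({α₁, α₂, α₃} : Set ℂ))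
    (m₁ m₂ m₃ : ℝ) (hm₁ : 0 < m₁) (hm₂ : 0 < m₂) (hm₃ : 0 < m₃) :
    ∀ z : ℂ, z ≠ α₁ → z ≠ α₂ → z ≠ α₃ →
      (m₁ : ℂ) / (z - α₁) + (m₂ : ℂ) / (z - α₂) + (m₃ : ℂ) / (z - α₃) = 0 →
      z ∈ interior (convexHull ℝ ({α₁, α₂, α₃} : Set ℂ)) := by
  intro z hz₁ hz₂ hz₃ h
  have hw₁ : z - α₁ ≠ 0 := sub_ne_zero.2 hz₁
  have hw₂ : z - α₂ ≠ 0 := sub_ne_zero.2 hz₂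
  have hw₃ : z - α₃ ≠ 0 := sub_ne_zero.2 hz₃
  set r₁ : ℝ := m₁ / Complex.normSq (z - α₁) with hr₁def
  set r₂ : ℝ := m₂ / Complex.normSq (z - α₂) with hr₂def
  set r₃ : ℝ := m₃ / Complex.normSq (z - α₃) with hr₃def
  have hr₁ : 0 < r₁ := div_pos hm₁ (Complex.normSq_pos.2 hw₁)
  have hr₂ : 0 < r₂ := div_pos hm₂ (Complex.normSq_pos.2 hw₂)
  have hr₃ : 0 < r₃ := div_pos hm₃ (Complex.normSq_pos.2 hw₃)
  set S : ℝ := r₁ + r₂ + r₃ with hSdef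
  have hS : 0 < S := by positivity
  have hSne : (S : ℂ) ≠ 0 := by exact_mod_cast hS.ne'
  -- conjugate the equation
  have h2 : (r₁ : ℂ) * (z - α₁) + (r₂ : ℂ) * (z - α₂) + (r₃ : ℂ) * (z - α₃) = 0 := by
    have hc := congrArg (starRingEnd ℂ) h
    simp only [map_add, map_div₀, Complex.conj_ofReal, map_zero] at hc
    rwa [conj_div_aux m₁ _ hw₁, conj_div_aux m₂ _ hw₂, conj_div_aux m₃ _ hw₃] at hc
  -- weights
  set t : Fin 3 → ℝ := ![r₁ / S, r₂ / S, r₃ / S] with htdef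
  have ht1 : ∑ i, t i = 1 := by
    simp [htdef, Fin.sum_univ_three, ← add_div, ← hSdef, hS.ne']
  have htpos : ∀ i, 0 < t i := by
    intro i
    fin_cases i <;> simp [htdef] <;> positivity
  -- z is the combination
  set p : Fin 3 → ℂ := ![α₁, α₂, α₃] with hpdef
  have hzc : z = (↑(r₁ / S) : ℂ) * α₁ + (↑(r₂ / S) : ℂ) * α₂ + (↑(r₃ / S) : ℂ) * α₃ := by
    have hSne' : (r₁ : ℂ) + r₂ + r₃ ≠ 0 := by
      rw [hSdef] at hSne; push_cast at hSne; exact hSne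
    simp only [hSdef]
    push_cast
    field_simp
    linear_combination h2
  have hind : AffineIndependent ℝ p :=
    affineIndependent_iff_not_collinear_set.2 hnc
  have htop : affineSpan ℝ (Set.range p) = ⊤ := by
    rw [hind.affineSpan_eq_top_iff_card_eq_finrank_add_one]
    simp [Complex.finrank_real_complex]
  let b : AffineBasis (Fin 3) ℝ ℂ := ⟨p, hind, htop⟩
  have hrange : Set.range ⇑b = ({α₁, α₂, α₃} : Set ℂ) := by
    show Set.range p = _
    simp [hpdef]
    ext x
    simp [Fin.exists_fin_succ_pi, Fin.exists_fin_two, or_assoc]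
    tauto
  have hcomb : z = Finset.univ.affineCombination ℝ ⇑b t := by
    rw [Finset.affineCombination_eq_linear_combination _ _ _ ht1]
    show z = ∑ i, t i • p i
    rw [Fin.sum_univ_three]
    simp only [hpdef, htdef, Matrix.cons_val_zero, Matrix.cons_val_one, Matrix.head_cons,
      Matrix.cons_val_two, Matrix.tail_cons, Complex.real_smul]
    exact hzc
  rw [← hrange, b.interior_convexHull]
  intro i
  rw [hcomb, b.coord_apply_combination_of_mem (Finset.mem_univ i) ht1]
  exact htpos i
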